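/- arXiv:2403.05529 — 2 statements merged into one kernel-verified Lean document; each statement's English description precedes it below -/
import Mathlib

section
/- If (U,V) is a bivariate Gaussian with standard normal marginals and correlation α ∈ [-1,1], then E[h_j(U) h_k(V)] = δ_{jk} α^k for all j, k ≥ 0, where h_k denotes the k-th normalized Hermite polynomial. -/
/-!
Realize `V = αU + βW` with `W` a standard Gaussian independent of `U` and `α² + β² = 1`.
Gaussian integration by parts, `E[W f(W)] = E[f'(W)]`, makes `X - d/dx` adjoint to `d/dx`
in `L²(N(0,1))`; with `He_{k+1} = X He_k - He_k'` and `He_k' = k He_{k-1}` this gives the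
orthogonality `E[He_j(U) He_k(U)] = δ_{jk} k!`. Integrating by parts in `W` alone gives the
Mehler-type identity `E[He_k(αu + βW)] = α^k He_k(u)` by induction on `k`, and Fubini combines
the two.
-/

open MeasureTheory ProbabilityTheory

/-- The normalized probabilist's Hermite polynomial `h_k(z) = He_k(z)/√(k!)`. -/
noncomputable def hermiteN (k : ℕ) (z : ℝ) : ℝ :=
  Polynomial.aeval z (Polynomial.hermite k) / Real.sqrt (Nat.factorial k)

open Polynomial Real
open scoped NNReal Nat

theorem Polynomial.derivative_hermite_succ (n : ℕ) :
    derivative (hermite (n + 1)) = ((n : ℤ[X]) + 1) * hermite n := by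
  induction n with
  | zero => simp
  | succ n ih =>
    rw [hermite_succ (n + 1), derivative_sub, derivative_mul, derivative_X, ih,
      derivative_mul, hermite_succ n]
    simp only [derivative_add, derivative_natCast, derivative_one]
    push_cast
    ring

lemma Polynomial.aeval_map_comp_affine {R : Type*} [CommRing R] [Algebra R ℝ] (P : R[X])
    (c b y : ℝ) :
    aeval y ((P.map (algebraMap R ℝ)).comp (C c + C b * X)) = aeval (c + b * y) P := by
  simp [aeval_comp, aeval_map_algebraMap]

namespace ProbabilityTheory

variable {μ : ℝ} {v : ℝ≥0} {R : Type*} [CommRing R] [Algebra R ℝ]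

lemma hasDerivAt_gaussianPDFReal (μ : ℝ) (v : ℝ≥0) (x : ℝ) :
    HasDerivAt (gaussianPDFReal μ v) (-((x - μ) / v) * gaussianPDFReal μ v x) x := by
  have h : HasDerivAt (fun y => -(y - μ) ^ 2 / (2 * (v : ℝ))) (-(2 * (x - μ)) / (2 * v)) x := by
    simpa using (((hasDerivAt_id' x).sub_const μ).fun_pow 2).fun_neg.div_const (2 * (v : ℝ))
  rw [gaussianPDFReal_def]
  refine (h.exp.const_mul _).congr_deriv ?_
  field_simp

lemma integrable_gaussianReal_iff (hv : v ≠ 0) {f : ℝ → ℝ} :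
    Integrable f (gaussianReal μ v) ↔ Integrable (fun x => gaussianPDFReal μ v x * f x) := by
  rw [gaussianReal_of_var_ne_zero _ hv, integrable_withDensity_iff_integrable_smul'
    (measurable_gaussianPDF μ v) (ae_of_all _ fun _ => gaussianPDF_lt_top)]
  simp [toReal_gaussianPDF]

theorem integral_sub_mul_gaussianReal (hv : v ≠ 0) {f f' : ℝ → ℝ}
    (hf : ∀ x, HasDerivAt f (f' x) x) (hf_int : Integrable f (gaussianReal μ v))
    (hf'_int : Integrable f' (gaussianReal μ v))
    (hxf_int : Integrable (fun x => (x - μ) * f x) (gaussianReal μ v)) :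
    ∫ x, (x - μ) * f x ∂gaussianReal μ v = v * ∫ x, f' x ∂gaussianReal μ v := by
  rw [integrable_gaussianReal_iff hv] at hf_int hf'_int hxf_int
  have hv' : (v : ℝ) ≠ 0 := by exact_mod_cast hv
  have hibp := integral_mul_deriv_eq_deriv_mul_of_integrable (fun x _ => hf x)
    (fun x _ => hasDerivAt_gaussianPDFReal μ v x)
    ((hxf_int.div_const (-v)).congr (ae_of_all _ fun x => by simp only [Pi.mul_apply]; field_simp))
    (hf'_int.congr (ae_of_all _ fun x => by simp only [Pi.mul_apply]; ring))
    (hf_int.congr (ae_of_all _ fun x => by simp only [Pi.mul_apply]; ring))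
  simp only [integral_gaussianReal_eq_integral_smul hv, smul_eq_mul]
  calc ∫ x, gaussianPDFReal μ v x * ((x - μ) * f x)
      = -v * ∫ x, f x * (-((x - μ) / v) * gaussianPDFReal μ v x) := by
        rw [← integral_const_mul]; congr 1 with x; field_simp
    _ = v * ∫ x, gaussianPDFReal μ v x * f' x := by
        simp only [hibp, mul_comm (f' _)]; ring

lemma integrable_pow_gaussianReal (n : ℕ) : Integrable (fun x => x ^ n) (gaussianReal μ v) :=
  (memLp_id_gaussianReal n).integrable_norm_pow'.mono' (by fun_prop)
    (ae_of_all _ fun x => by simp)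

lemma integrable_aeval_gaussianReal (P : R[X]) :
    Integrable (fun x => aeval x P) (gaussianReal μ v) := by
  simp_rw [aeval_eq_sum_range, Algebra.smul_def]
  exact integrable_finsetSum _ fun i _ => (integrable_pow_gaussianReal i).const_mul _

theorem integral_sub_mul_aeval_gaussianReal (hv : v ≠ 0) (P : R[X]) :
    ∫ x, (x - μ) * aeval x P ∂gaussianReal μ v
      = v * ∫ x, aeval x (derivative P) ∂gaussianReal μ v := by
  refine integral_sub_mul_gaussianReal hv (fun x => P.hasDerivAt_aeval x)
    (integrable_aeval_gaussianReal P) (integrable_aeval_gaussianReal _) ?_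
  refine (integrable_aeval_gaussianReal ((X - C μ) * P.map (algebraMap R ℝ))).congr
    (ae_of_all _ fun x => ?_)
  simp

local notation "γ" => gaussianReal 0 1

theorem integral_aeval_X_mul_gaussianReal_zero_one (P : R[X]) :
    ∫ x, aeval x (X * P) ∂γ = ∫ x, aeval x (derivative P) ∂γ := by
  simpa using integral_sub_mul_aeval_gaussianReal (μ := 0) one_ne_zero P

theorem integral_aeval_mul_aeval_X_mul_sub_derivative (P Q : R[X]) :
    ∫ x, aeval x P * aeval x (X * Q - derivative Q) ∂γ
      = ∫ x, aeval x (derivative P) * aeval x Q ∂γ := by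
  calc ∫ x, aeval x P * aeval x (X * Q - derivative Q) ∂γ
      = ∫ x, aeval x (X * (P * Q)) - aeval x (P * derivative Q) ∂γ := by
        congr with x; simp only [map_mul, map_sub, aeval_X]; ring
    _ = ∫ x, aeval x (derivative (P * Q)) - aeval x (P * derivative Q) ∂γ := by
        rw [integral_sub (integrable_aeval_gaussianReal _) (integrable_aeval_gaussianReal _),
          integral_sub (integrable_aeval_gaussianReal _) (integrable_aeval_gaussianReal _),
          integral_aeval_X_mul_gaussianReal_zero_one]
    _ = ∫ x, aeval x (derivative P) * aeval x Q ∂γ := by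
        congr with x; simp only [derivative_mul, map_add, map_mul]; ring

theorem integral_aeval_hermite_mul_aeval_hermite (j k : ℕ) :
    ∫ x, aeval x (hermite j) * aeval x (hermite k) ∂γ = if j = k then (k ! : ℝ) else 0 := by
  induction k generalizing j with
  | zero =>
    cases j with
    | zero => simp
    | succ i =>
      simp_rw [mul_comm _ (aeval _ (hermite 0)), hermite_succ i,
        integral_aeval_mul_aeval_X_mul_sub_derivative]
      simp
  | succ k ih =>
    rw [hermite_succ, integral_aeval_mul_aeval_X_mul_sub_derivative]
    cases j with
    | zero => simp
    | succ i =>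
      simp only [derivative_hermite_succ, map_mul, map_add, map_natCast, map_one, mul_assoc,
        integral_const_mul, ih, Nat.factorial_succ, add_left_inj]
      split_ifs <;> simp_all

lemma integrable_aeval_affine_gaussianReal (P : R[X]) (c b : ℝ) :
    Integrable (fun y => aeval (c + b * y) P) (gaussianReal μ v) :=
  (integrable_aeval_gaussianReal _).congr (ae_of_all _ fun y => aeval_map_comp_affine P c b y)

lemma integrable_mul_aeval_affine_gaussianReal (P : R[X]) (c b : ℝ) :
    Integrable (fun y => y * aeval (c + b * y) P) (gaussianReal μ v) :=
  (integrable_aeval_gaussianReal (X * (P.map (algebraMap R ℝ)).comp (C c + C b * X))).congr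
    (ae_of_all _ fun y => by simp only [map_mul, aeval_X, aeval_map_comp_affine])

theorem integral_mul_aeval_affine_gaussianReal_zero_one (P : R[X]) (c b : ℝ) :
    ∫ y, y * aeval (c + b * y) P ∂γ = b * ∫ y, aeval (c + b * y) (derivative P) ∂γ := by
  have h := integral_aeval_X_mul_gaussianReal_zero_one
    ((P.map (algebraMap R ℝ)).comp (C c + C b * X))
  simpa only [map_mul, aeval_X, aeval_map_comp_affine, derivative_comp, derivative_map,
    derivative_add, derivative_C, derivative_mul, derivative_X, zero_add, zero_mul, mul_one,
    aeval_C, Algebra.algebraMap_self_apply, RingHom.id_apply, integral_const_mul] using h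

theorem integral_aeval_affine_X_mul_sub_derivative {a b : ℝ} (hab : a ^ 2 + b ^ 2 = 1)
    (x : ℝ) (P : R[X]) :
    ∫ y, aeval (a * x + b * y) (X * P - derivative P) ∂γ
      = a * (x * ∫ y, aeval (a * x + b * y) P ∂γ
        - a * ∫ y, aeval (a * x + b * y) (derivative P) ∂γ) := by
  calc ∫ y, aeval (a * x + b * y) (X * P - derivative P) ∂γ
      = ∫ y, a * x * aeval (a * x + b * y) P + b * (y * aeval (a * x + b * y) P)
          - aeval (a * x + b * y) (derivative P) ∂γ := by
        congr with y; simp only [map_sub, map_mul, aeval_X]; ring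
    _ = a * x * ∫ y, aeval (a * x + b * y) P ∂γ + b * ∫ y, y * aeval (a * x + b * y) P ∂γ
          - ∫ y, aeval (a * x + b * y) (derivative P) ∂γ := by
        rw [integral_sub, integral_add, integral_const_mul, integral_const_mul]
        · exact (integrable_aeval_affine_gaussianReal P _ _).const_mul _
        · exact (integrable_mul_aeval_affine_gaussianReal P _ _).const_mul _
        · exact ((integrable_aeval_affine_gaussianReal P _ _).const_mul _).add
            ((integrable_mul_aeval_affine_gaussianReal P _ _).const_mul _)
        · exact integrable_aeval_affine_gaussianReal _ _ _
    _ = _ := by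
        rw [integral_mul_aeval_affine_gaussianReal_zero_one]
        linear_combination (∫ y, aeval (a * x + b * y) (derivative P) ∂γ) * hab

theorem integral_aeval_hermite_affine {a b : ℝ} (hab : a ^ 2 + b ^ 2 = 1) (x : ℝ) (k : ℕ) :
    ∫ y, aeval (a * x + b * y) (hermite k) ∂γ = a ^ k * aeval x (hermite k) := by
  induction k using Nat.twoStepInduction with
  | zero => simp
  | one =>
    rw [hermite_succ, integral_aeval_affine_X_mul_sub_derivative hab]
    simp
  | more n ih ih' =>
    rw [hermite_succ, integral_aeval_affine_X_mul_sub_derivative hab, derivative_hermite_succ,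
      ih']
    simp only [map_mul, map_add, map_natCast, map_one, integral_const_mul, ih, map_sub, aeval_X]
    ring

section Product

variable {μ₁ μ₂ : ℝ} {v₁ v₂ : ℝ≥0}

lemma integrable_aeval_mul_aeval_mul_aeval_affine (P S Q : ℝ[X]) (a b : ℝ) :
    Integrable (fun p : ℝ × ℝ => aeval p.1 P * aeval p.2 S * aeval (a * p.1 + b * p.2) Q)
      ((gaussianReal μ₁ v₁).prod (gaussianReal μ₂ v₂)) := by
  induction Q using Polynomial.induction_on generalizing P S with
  | C c =>
    simpa [mul_comm _ c] using
      ((integrable_aeval_gaussianReal P).mul_prod (integrable_aeval_gaussianReal S)).const_mul c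
  | add Q Q' hQ hQ' =>
    exact ((hQ P S).add (hQ' P S)).congr
      (ae_of_all _ fun p => by simp only [Pi.add_apply, map_add]; ring)
  | monomial n c ih =>
    refine ((ih (C a * X * P) S).add (ih P (C b * X * S))).congr (ae_of_all _ fun p => ?_)
    simp only [Pi.add_apply, map_mul, aeval_C, aeval_X, aeval_X_pow,
      Algebra.algebraMap_self_apply, pow_succ]
    ring

lemma integrable_aeval_mul_aeval_affine (P Q : R[X]) (a b : ℝ) :
    Integrable (fun p : ℝ × ℝ => aeval p.1 P * aeval (a * p.1 + b * p.2) Q)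
      ((gaussianReal μ₁ v₁).prod (gaussianReal μ₂ v₂)) := by
  simpa [aeval_map_algebraMap] using integrable_aeval_mul_aeval_mul_aeval_affine
    (P.map (algebraMap R ℝ)) 1 (Q.map (algebraMap R ℝ)) a b

end Product

theorem integral_aeval_hermite_mul_aeval_hermite_affine {a b : ℝ} (hab : a ^ 2 + b ^ 2 = 1)
    (j k : ℕ) :
    ∫ p : ℝ × ℝ, aeval p.1 (hermite j) * aeval (a * p.1 + b * p.2) (hermite k)
        ∂((gaussianReal 0 1).prod (gaussianReal 0 1))
      = if j = k then a ^ k * k ! else 0 := by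
  rw [integral_prod _ (integrable_aeval_mul_aeval_affine _ _ a b)]
  simp_rw [integral_const_mul, integral_aeval_hermite_affine hab, mul_left_comm _ (a ^ k),
    integral_const_mul, integral_aeval_hermite_mul_aeval_hermite, mul_ite, mul_zero]

end ProbabilityTheory

/-- If `(U,V)` is bivariate Gaussian with standard normal marginals and correlation `α`
(realized as `U = p.1`, `V = α p.1 + √(1-α²) p.2` for independent standard Gaussians),
then `E[h_j(U) h_k(V)] = δ_{jk} α^k`. -/
theorem stmt_1 (α : ℝ) (hα : α ∈ Set.Icc (-1 : ℝ) 1) (j k : ℕ) :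
    ∫ p : ℝ × ℝ, hermiteN j p.1 * hermiteN k (α * p.1 + Real.sqrt (1 - α ^ 2) * p.2)
        ∂((gaussianReal 0 1).prod (gaussianReal 0 1))
      = if j = k then α ^ k else 0 := by
  have hab : α ^ 2 + √(1 - α ^ 2) ^ 2 = 1 := by
    rw [sq_sqrt (by nlinarith [hα.1, hα.2])]; ring
  simp_rw [hermiteN, div_mul_div_comm, integral_div,
    integral_aeval_hermite_mul_aeval_hermite_affine hab]
  split_ifs with hjk
  · subst hjk
    rw [← sq, sq_sqrt (Nat.cast_nonneg _)]
    field_simp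
  · simp
end

section
/- Let σ(Z) = Z² e^{-Z²} and Z ∼ N(0,1). Then E[σ(Z) He_4(Z)] = −4√3/27 ≠ 0, where He_4(z) = z⁴ − 6z² + 3 is the (un-normalized) 4th Hermite polynomial. -/
/-!
Expanding `He₄`, the expectation is `M₃ − 6 M₂ + 3 M₁` with `Mₖ = E[Z^{2k} e^{−Z²}]`.
Absorbing `e^{−aZ²}` into the Gaussian density and using `∫ x^{2k} e^{−b x²} = Γ(k + 1/2) / b^{k+1/2}`
gives `E[Z^{2k} e^{−aZ²}] = (2k−1)‼ / (2a+1)^{k+1/2}`, so `Mₖ = 1/(3√3), 1/(3√3), 5/(9√3)` and the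
expectation is `(5 − 18 + 9)/(9√3) = −4√3/27`.
-/

open MeasureTheory ProbabilityTheory Real
open scoped Nat NNReal

lemma aeval_hermite_four (z : ℝ) :
    Polynomial.aeval z (Polynomial.hermite 4) = z ^ 4 - 6 * z ^ 2 + 3 := by
  simp [Polynomial.hermite_succ]
  ring

lemma integral_pow_mul_exp_neg_mul_sq (k : ℕ) {b : ℝ} (hb : 0 < b) :
    ∫ x, x ^ (2 * k) * exp (-b * x ^ 2) = (2 * k - 1 : ℕ)‼ * √(π / b) / (2 * b) ^ k := by
  have half_line : ∫ x in Set.Ioi 0, x ^ (2 * k) * exp (-b * x ^ 2)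
      = b ^ (-((2 * k : ℕ) + 1 : ℝ) / 2) * (1 / 2) * Gamma (((2 * k : ℕ) + 1 : ℝ) / 2) := by
    rw [← integral_rpow_mul_exp_neg_mul_rpow two_pos
      (neg_one_lt_zero.trans_le (Nat.cast_nonneg _)) hb]
    simp only [rpow_natCast, rpow_two]
  have hexp : ((2 * k : ℕ) + 1 : ℝ) / 2 = k + 1 / 2 := by push_cast; ring
  have hpow : b ^ (-((2 * k : ℕ) + 1 : ℝ) / 2) = (b ^ k * √b)⁻¹ := by
    rw [neg_div, hexp, rpow_neg hb.le, rpow_add hb, rpow_natCast, sqrt_eq_rpow]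
  calc ∫ x, x ^ (2 * k) * exp (-b * x ^ 2)
      = ∫ x, |x| ^ (2 * k) * exp (-b * |x| ^ 2) := by simp only [pow_mul, sq_abs]
    _ = 2 * ∫ x in Set.Ioi 0, x ^ (2 * k) * exp (-b * x ^ 2) :=
        integral_comp_abs (f := fun x ↦ x ^ (2 * k) * exp (-b * x ^ 2))
    _ = (2 * k - 1 : ℕ)‼ * √(π / b) / (2 * b) ^ k := by
        rw [half_line, hpow, hexp, Gamma_nat_add_half, sqrt_div' _ hb.le, mul_pow]
        field_simp

lemma integrable_pow_mul_exp_neg_mul_sq_gaussianReal (n : ℕ) {a : ℝ} (ha : 0 ≤ a) (μ : ℝ)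
    (v : ℝ≥0) : Integrable (fun z ↦ z ^ n * exp (-a * z ^ 2)) (gaussianReal μ v) := by
  refine ((memLp_id_gaussianReal n).integrable_norm_pow').mono' (by fun_prop)
    (ae_of_all _ fun z ↦ ?_)
  have hexp_le_one : exp (-a * z ^ 2) ≤ 1 := exp_le_one_iff.mpr (by nlinarith [sq_nonneg z])
  simp only [norm_mul, norm_pow, Real.norm_eq_abs, abs_exp, id]
  exact mul_le_of_le_one_right (by positivity) hexp_le_one

lemma integral_pow_mul_exp_neg_mul_sq_gaussianReal (k : ℕ) {a : ℝ} (ha : 0 < 2 * a + 1) :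
    ∫ z, z ^ (2 * k) * exp (-a * z ^ 2) ∂gaussianReal 0 1
      = (2 * k - 1 : ℕ)‼ / (√(2 * a + 1) * (2 * a + 1) ^ k) := by
  have hb : 0 < (2 * a + 1) / 2 := by positivity
  have hpdf (z : ℝ) : gaussianPDFReal 0 1 z • (z ^ (2 * k) * exp (-a * z ^ 2))
      = (√(2 * π))⁻¹ * (z ^ (2 * k) * exp (-((2 * a + 1) / 2) * z ^ 2)) := by
    rw [gaussianPDFReal, smul_eq_mul, show -((2 * a + 1) / 2) * z ^ 2 = -a * z ^ 2 + -z ^ 2 / 2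
      by ring, exp_add]
    simp only [NNReal.coe_one, mul_one, sub_zero]
    ring
  rw [integral_gaussianReal_eq_integral_smul one_ne_zero]
  simp only [hpdf]
  rw [integral_const_mul, integral_pow_mul_exp_neg_mul_sq k hb, mul_div_cancel₀ _ two_ne_zero,
    sqrt_div' _ hb.le, sqrt_div' _ two_pos.le, sqrt_mul two_pos.le]
  field_simp

/-- For `σ(Z) = Z² e^{-Z²}` with `Z ∼ N(0,1)`,
`E[σ(Z) He₄(Z)] = −4√3/27 ≠ 0`, where `He₄` is the 4th probabilist's Hermite
polynomial. -/
theorem stmt_9 :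
    (∫ z, (z ^ 2 * Real.exp (-z ^ 2)) * (Polynomial.aeval z (Polynomial.hermite 4))
        ∂(gaussianReal 0 1) = -4 * Real.sqrt 3 / 27) ∧
    (-4 * Real.sqrt 3 / 27 : ℝ) ≠ 0 := by
  set m : ℕ → ℝ → ℝ := fun k z ↦ z ^ (2 * k) * exp (-1 * z ^ 2)
  have hint (k : ℕ) : Integrable (m k) (gaussianReal 0 1) :=
    integrable_pow_mul_exp_neg_mul_sq_gaussianReal (2 * k) zero_le_one 0 1
  have hmoment (k : ℕ) : ∫ z, m k z ∂gaussianReal 0 1 = (2 * k - 1 : ℕ)‼ / (√3 * 3 ^ k) := by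
    rw [show (3 : ℝ) = 2 * 1 + 1 by norm_num]
    exact integral_pow_mul_exp_neg_mul_sq_gaussianReal k (by norm_num)
  have hexpand : (fun z : ℝ ↦ (z ^ 2 * exp (-z ^ 2)) * Polynomial.aeval z (Polynomial.hermite 4))
      = fun z ↦ m 3 z - 6 * m 2 z + 3 * m 1 z := by
    ext z
    simp only [m, aeval_hermite_four, neg_one_mul]
    ring
  refine ⟨?_, by positivity⟩
  rw [hexpand, integral_add (f := fun z ↦ m 3 z - 6 * m 2 z) (g := fun z ↦ 3 * m 1 z)
      ((hint 3).sub ((hint 2).const_mul 6)) ((hint 1).const_mul 3),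
    integral_sub (hint 3) ((hint 2).const_mul 6), integral_const_mul, integral_const_mul,
    hmoment, hmoment, hmoment]
  field_simp
  norm_num [Nat.doubleFactorial]
end
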